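/- arXiv:1407.0536 — 3 statements merged into one kernel-verified Lean document; each statement's English description precedes it below -/
import Mathlib

section
/- Let X_M and X_F be independent with densities f_{X_v}(x) = 2πλ_v x e^{-πλ_v x²} for v ∈ {M,F}, and let P_M > P_F > 0 and α > 2. Then P(P_M X_M^{-α} > P_F X_F^{-α} and X_M^{-α} ≤ X_F^{-α}) = λ_F/(λ_F + λ_M) − λ_F/(λ_F + (P_M/P_F)^{2/α} λ_M). -/
/-!
Conditionally on `X_M = x > 0`, the event says `b x < X_F ≤ x` with `b = (P_M / P_F)^(-1/α) ≤ 1`,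
which has probability `exp (-π λ_F b² x²) - exp (-π λ_F x²)`. For a Rayleigh variable `X` of
intensity `λ` one has `E[exp (-π k X²)] = λ / (λ + k)`, so averaging over `X_M` gives
`λ_M / (λ_M + λ_F b²) - λ_M / (λ_M + λ_F)`, which is the stated formula since
`b² = (P_M / P_F)^(-2/α)`.
-/

open MeasureTheory Real Set ProbabilityTheory

noncomputable def rayleighPDF (l x : ℝ) : ℝ := 2 * π * l * x * exp (-(π * l * x ^ 2))

/-- The law of the distance from the origin to the nearest point of a planar Poisson point process
of intensity `l`. -/
noncomputable def rayleighMeasure (l : ℝ) : Measure ℝ :=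
  (volume.restrict (Ioi 0)).withDensity fun x => ENNReal.ofReal (rayleighPDF l x)

/-- Distances `(x_M, x_F)` for which the macro station gives the stronger received power while the
femto station is the nearer one. -/
def decoupledRegion (PM PF α : ℝ) : Set (ℝ × ℝ) :=
  {p | PF * p.2 ^ (-α) < PM * p.1 ^ (-α) ∧ p.1 ^ (-α) ≤ p.2 ^ (-α)}

theorem integral_Ioi_mul_exp_neg_mul_sq {b : ℝ} (hb : 0 < b) :
    ∫ x in Ioi (0 : ℝ), x * exp (-(b * x ^ 2)) = (2 * b)⁻¹ := by
  have h := integral_mul_cexp_neg_mul_sq (b := (b : ℂ)) (by simpa using hb)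
  rw [← Complex.ofReal_inj, ← integral_complex_ofReal]
  push_cast
  simpa [neg_mul] using h

theorem mul_rpow_neg_lt_mul_rpow_neg_iff {a c x y α : ℝ} (ha : 0 < a) (hc : 0 < c) (hx : 0 < x)
    (hy : 0 < y) (hα : 0 < α) :
    a * y ^ (-α) < c * x ^ (-α) ↔ (c / a) ^ (-α⁻¹) * x < y := by
  have hca : 0 < c / a := div_pos hc ha
  have hz : 0 < (c / a) ^ (-α⁻¹) * x := by positivity
  have key : a * ((c / a) ^ (-α⁻¹) * x) ^ (-α) = c * x ^ (-α) := by
    rw [mul_rpow (rpow_nonneg hca.le _) hx.le, ← rpow_mul hca.le, neg_mul_neg,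
      inv_mul_cancel₀ hα.ne', rpow_one]
    field_simp
  rw [← key, mul_lt_mul_iff_right₀ ha, rpow_lt_rpow_iff_of_neg hy hz (neg_neg_of_pos hα)]

theorem sq_rpow_neg_inv {r : ℝ} (hr : 0 ≤ r) (α : ℝ) : (r ^ (-α⁻¹)) ^ 2 = (r ^ (2 / α))⁻¹ := by
  rw [← rpow_natCast, ← rpow_mul hr, ← rpow_neg hr]
  congr 1
  push_cast
  ring

section Rayleigh

variable {l : ℝ}

theorem continuous_rayleighPDF (l : ℝ) : Continuous (rayleighPDF l) := by
  unfold rayleighPDF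
  fun_prop

theorem rayleighPDF_nonneg (hl : 0 ≤ l) {x : ℝ} (hx : 0 ≤ x) : 0 ≤ rayleighPDF l x := by
  unfold rayleighPDF
  positivity

theorem integrable_rayleighPDF (hl : 0 < l) : Integrable (rayleighPDF l) := by
  have := (integrable_mul_exp_neg_mul_sq (mul_pos pi_pos hl)).const_mul (2 * π * l)
  refine this.congr (ae_of_all _ fun x => ?_)
  simp only [rayleighPDF, neg_mul]
  ring

theorem hasDerivAt_neg_exp_neg_mul_sq (l x : ℝ) :
    HasDerivAt (fun t => -exp (-(π * l * t ^ 2))) (rayleighPDF l x) x := by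
  have h : HasDerivAt (fun t => -(π * l * t ^ 2)) (-(π * l * (2 * x))) x :=
    ((hasDerivAt_pow 2 x).const_mul (π * l)).neg.congr_deriv (by norm_num)
  exact h.exp.neg.congr_deriv (by rw [rayleighPDF]; ring)

theorem integral_rayleighPDF (l u v : ℝ) :
    ∫ x in u..v, rayleighPDF l x = exp (-(π * l * u ^ 2)) - exp (-(π * l * v ^ 2)) := by
  rw [intervalIntegral.integral_eq_sub_of_hasDerivAt
    (fun x _ => hasDerivAt_neg_exp_neg_mul_sq l x)
    ((continuous_rayleighPDF l).intervalIntegrable u v)]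
  ring

theorem integral_Ioi_rayleighPDF_mul_exp {k : ℝ} (hlk : 0 < l + k) :
    ∫ x in Ioi 0, rayleighPDF l x * exp (-(π * k * x ^ 2)) = l / (l + k) := by
  have h : ∀ x, rayleighPDF l x * exp (-(π * k * x ^ 2))
      = 2 * π * l * (x * exp (-(π * (l + k) * x ^ 2))) := fun x => by
    rw [rayleighPDF, mul_assoc, ← exp_add]
    ring_nf
  simp_rw [h]
  rw [integral_const_mul, integral_Ioi_mul_exp_neg_mul_sq (by positivity)]
  field_simp

theorem rayleighMeasure_apply (hl : 0 < l) {s : Set ℝ} (hs : MeasurableSet s) :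
    rayleighMeasure l s = ENNReal.ofReal (∫ x in s ∩ Ioi 0, rayleighPDF l x) := by
  rw [rayleighMeasure, withDensity_apply _ hs, Measure.restrict_restrict hs]
  refine (ofReal_integral_eq_lintegral_ofReal (integrable_rayleighPDF hl).integrableOn ?_).symm
  filter_upwards [ae_restrict_mem (hs.inter measurableSet_Ioi)] with x hx
  exact rayleighPDF_nonneg hl.le hx.2.le

theorem isProbabilityMeasure_rayleighMeasure (hl : 0 < l) :
    IsProbabilityMeasure (rayleighMeasure l) := by
  constructor
  have h := integral_Ioi_rayleighPDF_mul_exp (k := 0) (by simpa using hl)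
  simp only [mul_zero, zero_mul, neg_zero, exp_zero, mul_one, add_zero, div_self hl.ne'] at h
  rw [rayleighMeasure_apply hl MeasurableSet.univ, univ_inter, h, ENNReal.ofReal_one]

theorem ae_pos_rayleighMeasure (l : ℝ) : ∀ᵐ x ∂rayleighMeasure l, 0 < x :=
  (withDensity_absolutelyContinuous _ _).ae_le (ae_restrict_mem measurableSet_Ioi)

theorem rayleighMeasure_Ioc (hl : 0 < l) {u v : ℝ} (hu : 0 ≤ u) (huv : u ≤ v) :
    rayleighMeasure l (Ioc u v) =
      ENNReal.ofReal (exp (-(π * l * u ^ 2)) - exp (-(π * l * v ^ 2))) := by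
  rw [rayleighMeasure_apply hl measurableSet_Ioc,
    inter_eq_left.2 (Ioc_subset_Ioi_self.trans (Ioi_subset_Ioi hu)),
    ← intervalIntegral.integral_of_le huv, integral_rayleighPDF]

theorem integral_exp_neg_mul_sq_rayleighMeasure {k : ℝ} (hl : 0 ≤ l) (hlk : 0 < l + k) :
    ∫ x, exp (-(π * k * x ^ 2)) ∂rayleighMeasure l = l / (l + k) := by
  rw [rayleighMeasure, integral_withDensity_eq_integral_toReal_smul
    (continuous_rayleighPDF l).measurable.ennreal_ofReal
    (ae_of_all _ fun _ => ENNReal.ofReal_lt_top),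
    ← integral_Ioi_rayleighPDF_mul_exp hlk]
  refine setIntegral_congr_fun measurableSet_Ioi fun x hx => ?_
  rw [ENNReal.toReal_ofReal (rayleighPDF_nonneg hl (mem_Ioi.1 hx).le), smul_eq_mul]

theorem integrable_exp_neg_mul_sq_rayleighMeasure (hl : 0 < l) {k : ℝ} (hk : 0 ≤ k) :
    Integrable (fun x => exp (-(π * k * x ^ 2))) (rayleighMeasure l) := by
  have := isProbabilityMeasure_rayleighMeasure hl
  refine Integrable.of_bound (by fun_prop) 1 (ae_of_all _ fun x => ?_)
  rw [norm_of_nonneg (exp_nonneg _), exp_le_one_iff]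
  have := pi_pos
  exact neg_nonpos.2 (by positivity)

theorem map_eq_rayleighMeasure {Ω : Type*} [MeasurableSpace Ω] {μ : Measure Ω} {X : Ω → ℝ}
    (hX : Measurable X) (hl : 0 < l)
    (hd : ∀ s, MeasurableSet s →
      μ (X ⁻¹' s) = ENNReal.ofReal (∫ x in s ∩ Ici 0, rayleighPDF l x)) :
    μ.map X = rayleighMeasure l := by
  ext s hs
  rw [Measure.map_apply hX hs, hd s hs, rayleighMeasure_apply hl hs]
  congr 1
  exact setIntegral_congr_set ((ae_eq_refl s).inter Ioi_ae_eq_Ici.symm)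

end Rayleigh

section DecoupledRegion

variable {PM PF α : ℝ}

theorem div_rpow_neg_inv_le_one (hPF : 0 < PF) (hPM : PF ≤ PM) (hα : 0 ≤ α) :
    (PM / PF) ^ (-α⁻¹) ≤ 1 :=
  rpow_le_one_of_one_le_of_nonpos ((one_le_div hPF).2 hPM) (by simpa using hα)

theorem measurableSet_decoupledRegion (PM PF α : ℝ) :
    MeasurableSet (decoupledRegion PM PF α) := by
  have h : Measurable fun t : ℝ => t ^ (-α) := by fun_prop
  exact (measurableSet_lt ((h.comp measurable_snd).const_mul PF)
      ((h.comp measurable_fst).const_mul PM)).inter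
    (measurableSet_le (h.comp measurable_fst) (h.comp measurable_snd))

theorem preimage_mk_decoupledRegion_inter_Ioi (hPF : 0 < PF) (hPM : 0 < PM) (hα : 0 < α)
    {x : ℝ} (hx : 0 < x) :
    Prod.mk x ⁻¹' decoupledRegion PM PF α ∩ Ioi 0 = Ioc ((PM / PF) ^ (-α⁻¹) * x) x := by
  have hα' : -α < 0 := neg_neg_of_pos hα
  ext y
  simp only [decoupledRegion, mem_inter_iff, mem_preimage, mem_ofPred_eq, mem_Ioi, mem_Ioc]
  constructor
  · rintro ⟨⟨hlt, hle⟩, hy⟩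
    exact ⟨(mul_rpow_neg_lt_mul_rpow_neg_iff hPF hPM hx hy hα).1 hlt,
      (rpow_le_rpow_iff_of_neg hx hy hα').1 hle⟩
  · rintro ⟨hlt, hle⟩
    have hy : 0 < y := lt_trans (by positivity) hlt
    exact ⟨⟨(mul_rpow_neg_lt_mul_rpow_neg_iff hPF hPM hx hy hα).2 hlt,
      (rpow_le_rpow_iff_of_neg hx hy hα').2 hle⟩, hy⟩

theorem rayleighMeasure_preimage_mk_decoupledRegion {l : ℝ} (hl : 0 < l) (hPF : 0 < PF)
    (hPM : PF ≤ PM) (hα : 0 < α) {x : ℝ} (hx : 0 < x) :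
    rayleighMeasure l (Prod.mk x ⁻¹' decoupledRegion PM PF α) = ENNReal.ofReal
      (exp (-(π * (l * ((PM / PF) ^ (-α⁻¹)) ^ 2) * x ^ 2)) - exp (-(π * l * x ^ 2))) := by
  have hb := div_rpow_neg_inv_le_one hPF hPM hα.le
  have hbx : 0 < (PM / PF) ^ (-α⁻¹) * x := by
    have : 0 < PM / PF := div_pos (hPF.trans_le hPM) hPF
    positivity
  rw [← Measure.measure_inter_eq_of_ae (t := Ioi 0) (ae_pos_rayleighMeasure l), inter_comm,
    preimage_mk_decoupledRegion_inter_Ioi hPF (hPF.trans_le hPM) hα hx,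
    rayleighMeasure_Ioc hl hbx.le (mul_le_of_le_one_left hx.le hb)]
  ring_nf

theorem rayleighMeasure_prod_decoupledRegion {lM lF : ℝ} (hlM : 0 < lM) (hlF : 0 < lF)
    (hPF : 0 < PF) (hPM : PF ≤ PM) (hα : 0 < α) :
    (rayleighMeasure lM).prod (rayleighMeasure lF) (decoupledRegion PM PF α) = ENNReal.ofReal
      (lM / (lM + lF * ((PM / PF) ^ (-α⁻¹)) ^ 2) - lM / (lM + lF)) := by
  have hb := div_rpow_neg_inv_le_one hPF hPM hα.le
  have hb0 : 0 ≤ (PM / PF) ^ (-α⁻¹) := rpow_nonneg (div_pos (hPF.trans_le hPM) hPF).le _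
  have := isProbabilityMeasure_rayleighMeasure hlF
  set k := lF * ((PM / PF) ^ (-α⁻¹)) ^ 2
  have hk : 0 ≤ k := by positivity
  have hkF : k ≤ lF := mul_le_of_le_one_right hlF.le (pow_le_one₀ hb0 hb)
  rw [Measure.prod_apply (measurableSet_decoupledRegion PM PF α)]
  have hsection : ∀ᵐ x ∂rayleighMeasure lM,
      rayleighMeasure lF (Prod.mk x ⁻¹' decoupledRegion PM PF α)
        = ENNReal.ofReal (exp (-(π * k * x ^ 2)) - exp (-(π * lF * x ^ 2))) := by
    filter_upwards [ae_pos_rayleighMeasure lM] with x hx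
    exact rayleighMeasure_preimage_mk_decoupledRegion hlF hPF hPM hα hx
  have hk_int := integrable_exp_neg_mul_sq_rayleighMeasure hlM hk
  have hlF_int := integrable_exp_neg_mul_sq_rayleighMeasure hlM hlF.le
  have hintegral : ∫ x, (exp (-(π * k * x ^ 2)) - exp (-(π * lF * x ^ 2))) ∂rayleighMeasure lM
      = lM / (lM + k) - lM / (lM + lF) := by
    rw [integral_sub hk_int hlF_int,
      integral_exp_neg_mul_sq_rayleighMeasure hlM.le (by positivity),
      integral_exp_neg_mul_sq_rayleighMeasure hlM.le (by positivity)]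
  rw [lintegral_congr_ae hsection, ← hintegral]
  refine (ofReal_integral_eq_lintegral_ofReal (hk_int.sub hlF_int)
    (ae_of_all _ fun x => sub_nonneg.2 (exp_le_exp.2 (neg_le_neg ?_)))).symm
  have := pi_pos
  gcongr

end DecoupledRegion

theorem stmt_1 {Ω : Type*} [MeasurableSpace Ω] (μ : Measure Ω) [IsProbabilityMeasure μ]
    (XM XF : Ω → ℝ) (hXM : Measurable XM) (hXF : Measurable XF)
    (lM lF : ℝ) (hlM : 0 < lM) (hlF : 0 < lF)
    (hind : ProbabilityTheory.IndepFun XM XF μ)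
    (hdM : ∀ s : Set ℝ, MeasurableSet s →
      μ (XM ⁻¹' s) = ENNReal.ofReal
        (∫ x in s ∩ Ici 0, 2 * π * lM * x * Real.exp (-(π * lM * x ^ 2))))
    (hdF : ∀ s : Set ℝ, MeasurableSet s →
      μ (XF ⁻¹' s) = ENNReal.ofReal
        (∫ x in s ∩ Ici 0, 2 * π * lF * x * Real.exp (-(π * lF * x ^ 2))))
    (PM PF α : ℝ) (hPF : 0 < PF) (hPM : PF < PM) (hα : 2 < α) :
    μ {ω | PM * XM ω ^ (-α) > PF * XF ω ^ (-α) ∧ XM ω ^ (-α) ≤ XF ω ^ (-α)} =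
      ENNReal.ofReal (lF / (lF + lM) - lF / (lF + (PM / PF) ^ (2 / α) * lM)) := by
  have hevent : {ω | PM * XM ω ^ (-α) > PF * XF ω ^ (-α) ∧ XM ω ^ (-α) ≤ XF ω ^ (-α)}
      = (fun ω => (XM ω, XF ω)) ⁻¹' decoupledRegion PM PF α := rfl
  rw [hevent, ← Measure.map_apply (hXM.prodMk hXF) (measurableSet_decoupledRegion PM PF α),
    (indepFun_iff_map_prod_eq_prod_map_map hXM.aemeasurable hXF.aemeasurable).1 hind,
    map_eq_rayleighMeasure hXM hlM hdM, map_eq_rayleighMeasure hXF hlF hdF,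
    rayleighMeasure_prod_decoupledRegion hlM hlF hPF hPM.le (by linarith),
    sq_rpow_neg_inv (div_pos (hPF.trans hPM) hPF).le]
  have hc : 0 < (PM / PF) ^ (2 / α) := rpow_pos_of_pos (div_pos (hPF.trans hPM) hPF) _
  congr 1
  field_simp
  ring
end

section
/- Fix λ_M > 0 and c > 1, and define g(λ_F) = λ_F/(λ_F+λ_M) − λ_F/(λ_F + c λ_M) for λ_F ≥ 0 (the decoupled-access probability). Then g(0) = 0, g(λ_F) → 0 as λ_F → ∞, g(λ_F) > 0 for all λ_F > 0, and g attains its maximum at λ_F = √c · λ_M with maximum value (√c − 1)/(√c + 1). -/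
/-!
With `c = s²`, the gap `(s - 1)/(s + 1) - g x` equals
`(s - 1) (x - s λ_M)² / ((s + 1)(x + λ_M)(x + s² λ_M))`, which is nonnegative for `x ≥ 0` and
vanishes at `x = s λ_M`. For the limit, write `g x = c λ_M/(x + c λ_M) - λ_M/(x + λ_M)`.
-/

open Filter Real

open scoped Topology

noncomputable section

/-- `decoupledProb λ_M c λ_F` is the paper's `g(λ_F)`. -/
def decoupledProb (a c x : ℝ) : ℝ := x / (x + a) - x / (x + c * a)

variable {a c s x : ℝ}

lemma decoupledProb_eq_sub_div (hxa : x + a ≠ 0) (hxca : x + c * a ≠ 0) :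
    decoupledProb a c x = c * a / (x + c * a) - a / (x + a) := by
  unfold decoupledProb
  rw [div_sub_div _ _ hxa hxca, div_sub_div _ _ hxca hxa]
  ring

lemma tendsto_decoupledProb_atTop (a c : ℝ) : Tendsto (decoupledProb a c) atTop (𝓝 0) := by
  have hlim : Tendsto (fun x ↦ c * a / (x + c * a) - a / (x + a)) atTop (𝓝 (0 - 0)) :=
    (tendsto_const_nhds.div_atTop (tendsto_atTop_add_const_right _ _ tendsto_id)).sub
      (tendsto_const_nhds.div_atTop (tendsto_atTop_add_const_right _ _ tendsto_id))
  rw [sub_zero] at hlim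
  refine hlim.congr' ?_
  filter_upwards [eventually_gt_atTop (-a), eventually_gt_atTop (-(c * a))] with x hxa hxca
  rw [decoupledProb_eq_sub_div (by linarith) (by linarith)]

lemma decoupledProb_pos (ha : 0 < a) (hc : 1 < c) (hx : 0 < x) : 0 < decoupledProb a c x := by
  have hlt : x / (x + c * a) < x / (x + a) :=
    div_lt_div_of_pos_left hx (by linarith) (by nlinarith)
  exact sub_pos.2 hlt

lemma decoupledProb_sq_mul_self (ha : a ≠ 0) (hs : 0 < s) :
    decoupledProb a (s ^ 2) (s * a) = (s - 1) / (s + 1) := by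
  have hs1 : s + 1 ≠ 0 := by positivity
  have hs' : s ≠ 0 := hs.ne'
  unfold decoupledProb
  field_simp
  ring

lemma decoupledProb_sq_le (ha : 0 < a) (hs : 1 ≤ s) (hx : 0 ≤ x) :
    decoupledProb a (s ^ 2) x ≤ (s - 1) / (s + 1) := by
  have hxa : 0 < x + a := by linarith
  have hxca : 0 < x + s ^ 2 * a := by positivity
  unfold decoupledProb
  rw [div_sub_div _ _ hxa.ne' hxca.ne', div_le_div_iff₀ (by positivity) (by linarith)]
  nlinarith [mul_nonneg (sub_nonneg.2 hs) (sq_nonneg (x - s * a))]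

end

theorem stmt_5 (lM c : ℝ) (hlM : 0 < lM) (hc : 1 < c)
    (g : ℝ → ℝ) (hg : ∀ lF, g lF = lF / (lF + lM) - lF / (lF + c * lM)) :
    g 0 = 0 ∧
    Tendsto g atTop (nhds 0) ∧
    (∀ lF > 0, 0 < g lF) ∧
    (∀ lF ≥ 0, g lF ≤ g (Real.sqrt c * lM)) ∧
    g (Real.sqrt c * lM) = (Real.sqrt c - 1) / (Real.sqrt c + 1) := by
  obtain rfl : g = decoupledProb lM c := funext hg
  have hs : 1 < √c := by rwa [lt_sqrt zero_le_one, one_pow]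
  have hc_sq : c = √c ^ 2 := (sq_sqrt (by linarith)).symm
  set s := √c
  have hmax : decoupledProb lM c (s * lM) = (s - 1) / (s + 1) := by
    rw [hc_sq]
    exact decoupledProb_sq_mul_self hlM.ne' (by linarith)
  refine ⟨by simp [decoupledProb], tendsto_decoupledProb_atTop lM c,
    fun _ hx ↦ decoupledProb_pos hlM hc hx, fun x hx ↦ ?_, hmax⟩
  rw [hmax, hc_sq]
  exact decoupledProb_sq_le hlM hs.le hx
end

section
/- Let α > 2 and define κ(γ) = γ^{2/α} ∫_{γ^{-2/α}}^∞ du/(1+u^{α/2}) for γ > 0. Then κ is strictly increasing in γ, κ(γ) → 0 as γ → 0⁺, and κ(γ) → ∞ as γ → ∞. -/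
/-!
With `T a = ∫_a^∞ du / (1 + u^{α/2})`, we have `κ γ = γ^{2/α} T(γ^{-2/α})`. For `α > 2` the integrand
is positive and `O(u^{-α/2})` with `α/2 > 1`, so `T` is finite, positive and antitone on `[0, ∞)`.
Then `κ` is a product of the positive, strictly increasing `γ^{2/α}` and the positive, increasing
`T(γ^{-2/α})`, and the bounds `γ^{2/α} T 1 ≤ κ γ ≤ γ^{2/α} T 0` (for `γ ≥ 1` resp. all `γ > 0`)
give both limits.
-/

open MeasureTheory Real Set Filter Topology

namespace InterferencePenalty

variable {α : ℝ}

lemma one_div_one_add_rpow_pos (α : ℝ) {u : ℝ} (hu : 0 < u) : 0 < 1 / (1 + u ^ (α / 2)) := by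
  have := rpow_pos_of_pos hu (α / 2)
  positivity

lemma one_div_one_add_rpow_le_one (α : ℝ) {u : ℝ} (hu : 0 < u) : 1 / (1 + u ^ (α / 2)) ≤ 1 := by
  have := rpow_pos_of_pos hu (α / 2)
  rw [div_le_one (by linarith)]
  linarith

lemma one_div_one_add_rpow_le_rpow_neg (α : ℝ) {u : ℝ} (hu : 0 < u) :
    1 / (1 + u ^ (α / 2)) ≤ u ^ (-(α / 2)) := by
  have := rpow_pos_of_pos hu (α / 2)
  rw [rpow_neg hu.le, ← one_div]
  exact one_div_le_one_div_of_le this (by linarith)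

lemma measurable_one_div_one_add_rpow (α : ℝ) : Measurable fun u : ℝ => 1 / (1 + u ^ (α / 2)) :=
  measurable_const.div (measurable_const.add (measurable_id.pow_const _))

lemma integrableOn_Ioi_zero_one_div_one_add_rpow (hα : 2 < α) :
    IntegrableOn (fun u : ℝ => 1 / (1 + u ^ (α / 2))) (Ioi 0) := by
  have hmeas {μ : Measure ℝ} : AEStronglyMeasurable (fun u : ℝ => 1 / (1 + u ^ (α / 2))) μ := (measurable_one_div_one_add_rpow α).aestronglyMeasurable
  have near_zero : IntegrableOn (fun u : ℝ => 1 / (1 + u ^ (α / 2))) (Ioc 0 1) := by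
    refine Measure.integrableOn_of_bounded (M := 1) measure_Ioc_lt_top.ne hmeas ?_
    filter_upwards [ae_restrict_mem measurableSet_Ioc] with u hu
    rw [norm_of_nonneg (one_div_one_add_rpow_pos α hu.1).le]
    exact one_div_one_add_rpow_le_one α hu.1
  have near_infty : IntegrableOn (fun u : ℝ => 1 / (1 + u ^ (α / 2))) (Ioi 1) := by
    refine Integrable.mono' (integrableOn_Ioi_rpow_of_lt (a := -(α / 2)) (by linarith) one_pos) hmeas ?_
    filter_upwards [ae_restrict_mem measurableSet_Ioi] with u hu
    have hu0 : 0 < u := one_pos.trans hu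
    rw [norm_of_nonneg (one_div_one_add_rpow_pos α hu0).le]
    exact one_div_one_add_rpow_le_rpow_neg α hu0
  have := near_zero.union near_infty
  rwa [Ioc_union_Ioi_eq_Ioi zero_le_one] at this

lemma setIntegral_Ioi_one_div_one_add_rpow_pos (hα : 2 < α) {a : ℝ} (ha : 0 ≤ a) :
    0 < ∫ u in Ioi a, 1 / (1 + u ^ (α / 2)) := by
  have hpos : ∀ u ∈ Ioi a, 0 < 1 / (1 + u ^ (α / 2)) := fun u hu =>
    one_div_one_add_rpow_pos α (ha.trans_lt hu)
  have hsupport : Function.support (fun u : ℝ => 1 / (1 + u ^ (α / 2))) ∩ Ioi a = Ioi a :=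
    inter_eq_right.2 fun u hu => (hpos u hu).ne'
  rw [setIntegral_pos_iff_support_of_nonneg_ae
    ((ae_restrict_iff' measurableSet_Ioi).2 (ae_of_all _ fun u hu => (hpos u hu).le))
    ((integrableOn_Ioi_zero_one_div_one_add_rpow hα).mono_set (Ioi_subset_Ioi ha)), hsupport]
  simp

lemma antitoneOn_setIntegral_Ioi_one_div_one_add_rpow (hα : 2 < α) :
    AntitoneOn (fun a : ℝ => ∫ u in Ioi a, 1 / (1 + u ^ (α / 2))) (Ici 0) := by
  intro a ha b _ hab
  refine setIntegral_mono_set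
    ((integrableOn_Ioi_zero_one_div_one_add_rpow hα).mono_set (Ioi_subset_Ioi ha)) ?_
    (Ioi_subset_Ioi hab).eventuallyLE
  exact (ae_restrict_iff' measurableSet_Ioi).2
    (ae_of_all _ fun u hu => (one_div_one_add_rpow_pos α ((mem_Ici.1 ha).trans_lt hu)).le)

noncomputable def penaltyFactor (α γ : ℝ) : ℝ :=
  γ ^ (2 / α) * ∫ u in Ioi (γ ^ (-(2 / α))), 1 / (1 + u ^ (α / 2))

lemma strictMonoOn_penaltyFactor (hα : 2 < α) : StrictMonoOn (penaltyFactor α) (Ioi 0) := by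
  intro x (hx : 0 < x) y (hy : 0 < y) hxy
  have hexp : 0 < 2 / α := by positivity
  have htail : ∫ u in Ioi (x ^ (-(2 / α))), 1 / (1 + u ^ (α / 2)) ≤
      ∫ u in Ioi (y ^ (-(2 / α))), 1 / (1 + u ^ (α / 2)) :=
    antitoneOn_setIntegral_Ioi_one_div_one_add_rpow hα (rpow_nonneg hy.le _) (rpow_nonneg hx.le _)
      (rpow_le_rpow_of_nonpos hx hxy.le (by linarith))
  exact mul_lt_mul (rpow_lt_rpow hx.le hxy hexp) htail
    (setIntegral_Ioi_one_div_one_add_rpow_pos hα (rpow_nonneg hx.le _)) (rpow_nonneg hy.le _)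

lemma tendsto_penaltyFactor_nhdsGT_zero (hα : 2 < α) :
    Tendsto (penaltyFactor α) (𝓝[>] 0) (𝓝 0) := by
  set T₀ : ℝ := ∫ u in Ioi (0 : ℝ), 1 / (1 + u ^ (α / 2))
  have hexp : 0 < 2 / α := by positivity
  have hupper : Tendsto (fun γ : ℝ => γ ^ (2 / α) * T₀) (𝓝[>] 0) (𝓝 0) := by
    have := ((continuous_rpow_const hexp.le).tendsto 0).mono_left (nhdsWithin_le_nhds (s := Ioi 0))
    simpa [zero_rpow hexp.ne'] using this.mul_const T₀
  refine tendsto_of_tendsto_of_tendsto_of_le_of_le' tendsto_const_nhds hupper ?_ ?_ <;>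
    filter_upwards [self_mem_nhdsWithin] with γ (hγ : 0 < γ)
  · exact mul_nonneg (rpow_nonneg hγ.le _)
      (setIntegral_Ioi_one_div_one_add_rpow_pos hα (rpow_nonneg hγ.le _)).le
  · exact mul_le_mul_of_nonneg_left (antitoneOn_setIntegral_Ioi_one_div_one_add_rpow hα
      (le_refl (0 : ℝ)) (rpow_nonneg hγ.le _) (rpow_nonneg hγ.le _)) (rpow_nonneg hγ.le _)

lemma tendsto_penaltyFactor_atTop (hα : 2 < α) : Tendsto (penaltyFactor α) atTop atTop := by
  have hexp : 0 < 2 / α := by positivity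
  have hlower : Tendsto (fun γ : ℝ => γ ^ (2 / α) * ∫ u in Ioi 1, 1 / (1 + u ^ (α / 2)))
      atTop atTop :=
    (tendsto_rpow_atTop hexp).atTop_mul_const
      (setIntegral_Ioi_one_div_one_add_rpow_pos hα zero_le_one)
  refine tendsto_atTop_mono' atTop ?_ hlower
  filter_upwards [eventually_ge_atTop 1] with γ hγ
  have hγ0 : 0 < γ := one_pos.trans_le hγ
  exact mul_le_mul_of_nonneg_left (antitoneOn_setIntegral_Ioi_one_div_one_add_rpow hα
    (rpow_nonneg hγ0.le _) (zero_le_one' ℝ) (rpow_le_one_of_one_le_of_nonpos hγ (by linarith)))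
    (rpow_nonneg hγ0.le _)

end InterferencePenalty

open InterferencePenalty

theorem stmt_19 (α : ℝ) (hα : 2 < α)
    (κ : ℝ → ℝ)
    (hκ : ∀ γ > (0 : ℝ), κ γ = γ ^ (2 / α) * ∫ u in Ioi (γ ^ (-(2 / α))), 1 / (1 + u ^ (α / 2))) :
    StrictMonoOn κ (Ioi 0) ∧
    Tendsto κ (nhdsWithin 0 (Ioi 0)) (nhds 0) ∧
    Tendsto κ atTop atTop := by
  have hκ_eq : EqOn (penaltyFactor α) κ (Ioi 0) := fun γ hγ => (hκ γ hγ).symm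
  refine ⟨fun x hx y hy hxy => ?_, ?_, ?_⟩
  · rw [← hκ_eq hx, ← hκ_eq hy]
    exact strictMonoOn_penaltyFactor hα hx hy hxy
  · exact (tendsto_penaltyFactor_nhdsGT_zero hα).congr' (eventuallyEq_nhdsWithin_of_eqOn hκ_eq)
  · exact (tendsto_penaltyFactor_atTop hα).congr'
      (eventually_gt_atTop 0 |>.mono fun γ hγ => hκ_eq hγ)
end
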